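/- arXiv:1304.6887 — 2 statements merged into one kernel-verified Lean document; each statement's English description precedes it below -/
import Mathlib

section
/- Let k > 1 be an integer. Then the positive integer solutions of the equation x² − (k² + 4)·y² = 4 are exactly the pairs (x, y) = (V_{2n}(k,1), U_{2n}(k,1)) for n ≥ 1. -/
/-- Generalized Fibonacci sequence: `U 0 = 0`, `U 1 = 1`, `U (n+2) = k * U (n+1) + s * U n`. -/
def genFib (k s : ℤ) : ℕ → ℤ
  | 0 => 0
  | 1 => 1
  | n + 2 => k * genFib k s (n + 1) + s * genFib k s n

/-- Generalized Lucas sequence: `V 0 = 2`, `V 1 = k`, `V (n+2) = k * V (n+1) + s * V n`. -/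
def genLucas (k s : ℤ) : ℕ → ℤ
  | 0 => 2
  | 1 => k
  | n + 2 => k * genLucas k s (n + 1) + s * genLucas k s n

private lemma key (k : ℤ) : ∀ n : ℕ,
    2 * genLucas k 1 (n+1) = k * genLucas k 1 n + (k^2+4) * genFib k 1 n ∧
    2 * genFib k 1 (n+1) = k * genFib k 1 n + genLucas k 1 n := by
  intro n
  induction n with
  | zero => refine ⟨by simp [genFib, genLucas]; ring, by simp [genFib, genLucas]⟩
  | succ n ih =>
    obtain ⟨h1, h2⟩ := ih
    constructor
    · have hL : genLucas k 1 (n+2) = k * genLucas k 1 (n+1) + 1 * genLucas k 1 n := rfl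
      have hd : 2*(2 * genLucas k 1 (n+2)) =
          2*(k * genLucas k 1 (n+1) + (k^2+4) * genFib k 1 (n+1)) := by
        rw [hL]; linear_combination k*h1 - (k^2+4)*h2
      linarith
    · have hF : genFib k 1 (n+2) = k * genFib k 1 (n+1) + 1 * genFib k 1 n := rfl
      have hd : 2*(2 * genFib k 1 (n+2)) =
          2*(k * genFib k 1 (n+1) + genLucas k 1 (n+1)) := by
        rw [hF]; linear_combination k*h2 - h1
      linarith

private lemma pellVal (k : ℤ) : ∀ n : ℕ,
    (genLucas k 1 n)^2 - (k^2+4) * (genFib k 1 n)^2 = 4 * (-1:ℤ)^n := by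
  intro n
  induction n with
  | zero => simp [genFib, genLucas]
  | succ n ih =>
    obtain ⟨h1, h2⟩ := key k n
    have hd : 4*((genLucas k 1 (n+1))^2 - (k^2+4) * (genFib k 1 (n+1))^2) =
        4*(4 * (-1:ℤ)^(n+1)) := by
      linear_combination (2*genLucas k 1 (n+1) + k*genLucas k 1 n + (k^2+4)*genFib k 1 n) * h1
        - (k^2+4)*(2*genFib k 1 (n+1) + k*genFib k 1 n + genLucas k 1 n) * h2
        + (k^2 - (k^2+4))*ih
    linarith

private lemma key2 (k : ℤ) (n : ℕ) :
    2 * genLucas k 1 (n+2) = (k^2+2) * genLucas k 1 n + (k^2+4)*k * genFib k 1 n ∧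
    2 * genFib k 1 (n+2) = k * genLucas k 1 n + (k^2+2) * genFib k 1 n := by
  obtain ⟨h1, h2⟩ := key k n
  obtain ⟨h3, h4⟩ := key k (n+1)
  constructor
  · have hd : 2*(2 * genLucas k 1 (n+2)) =
        2*((k^2+2) * genLucas k 1 n + (k^2+4)*k * genFib k 1 n) := by
      linear_combination 2*h3 + k*h1 + (k^2+4)*h2
    linarith
  · have hd : 2*(2 * genFib k 1 (n+2)) =
        2*(k * genLucas k 1 n + (k^2+2) * genFib k 1 n) := by
      linear_combination 2*h4 + k*h2 + h1
    linarith

private lemma descent (k : ℤ) (hk : 1 < k) : ∀ m : ℕ, ∀ x y : ℤ, 0 < x → 0 < y → y.toNat ≤ m →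
    x ^ 2 - (k ^ 2 + 4) * y ^ 2 = 4 →
    ∃ n : ℕ, 1 ≤ n ∧ x = genLucas k 1 (2 * n) ∧ y = genFib k 1 (2 * n) := by
  intro m
  induction m with
  | zero => intro x y hx hy hle _; exfalso; omega
  | succ m ih =>
    intro x y hx hy hle heq
    have hk0 : (0:ℤ) < k := by linarith
    -- x > k*y
    have hxky : k * y < x := by nlinarith [mul_pos hk0 hy, sq_nonneg (x + k*y)]
    -- y ≥ k  (otherwise contradiction)
    have hyk : k ≤ y := by
      by_contra hlt
      push_neg at hlt
      have hub : x < k*y + 2 := by nlinarith [mul_pos hk0 hy]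
      have hxe : x = k*y + 1 := by
        have := Int.add_one_le_iff.mpr hxky
        have := Int.lt_iff_add_one_le.mp hub
        linarith
      have hcontr : (2:ℤ) ∣ 1 := ⟨2*y^2 + 2 - k*y, by nlinarith [hxe]⟩
      norm_num at hcontr
    rcases eq_or_lt_of_le hyk with hyeq | hygt
    · -- base case: y = k, x = k^2 + 2
      have hx2 : x^2 = (k^2+2)^2 := by rw [← hyeq] at heq; linear_combination heq
      have hxe : x = k^2 + 2 := by nlinarith [sq_nonneg (x - (k^2+2)), sq_nonneg (x + (k^2+2))]
      refine ⟨1, le_refl 1, ?_, ?_⟩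
      · rw [hxe]; norm_num [genLucas]; ring
      · rw [← hyeq]; norm_num [genFib]
    · -- descent step
      have hpar : (2:ℤ) ∣ (x - k*y) := by
        rcases Int.even_or_odd (x - k*y) with h | h
        · exact h.two_dvd
        · exfalso
          have h2 : Odd (x + k*y) := by
            have he : x + k*y = (x - k*y) + 2*(k*y) := by ring
            rw [he]; exact h.add_even (even_two_mul _)
          have h3 : (x - k*y) * (x + k*y) = 2*(2 + 2*y^2) := by linear_combination heq
          have h4 := h.mul h2
          rw [h3] at h4
          exact ((Int.not_odd_iff_even (n := 2*(2 + 2*y^2))).mpr (even_two_mul _)) h4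
      obtain ⟨t, ht⟩ := hpar
      have hu : (k^2+2)*x - (k^2+4)*k*y = 2*((k^2+2)*t - k*y) := by linear_combination (k^2+2)*ht
      have hv : (k^2+2)*y - k*x = 2*(y - k*t) := by linear_combination (-k)*ht
      set u : ℤ := (k^2+2)*t - k*y with hudef
      set v : ℤ := y - k*t with hvdef
      -- new, smaller solution
      have heq' : u^2 - (k^2+4)*v^2 = 4 := by
        have hd : 4*(u^2 - (k^2+4)*v^2) = 4*4 := by
          linear_combination ((k^2+2)*x - (k^2+4)*k*y + 2*u) * hu
            - (k^2+4)*((k^2+2)*y - k*x + 2*v) * hv + 4*heq - 8*(x + k*y + 2*t)*ht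
        linarith
      have hupos : 0 < u := by nlinarith [mul_pos hk0 hy, mul_pos hx hy]
      have hvpos : 0 < v := by nlinarith [mul_pos hk0 hx]
      have hvlt : v < y := by nlinarith [mul_lt_mul_of_pos_left hxky hk0]
      obtain ⟨n, hn, hxu, hyv⟩ := ih u v hupos hvpos (by omega) heq'
      refine ⟨n + 1, by omega, ?_, ?_⟩
      · obtain ⟨hL2, _⟩ := key2 k (2*n)
        have h2n : 2*(n+1) = 2*n + 2 := by omega
        rw [h2n]
        have hd : 2*(2 * genLucas k 1 (2*n+2)) = 2*(2*x) := by
          rw [← hxu, ← hyv] at hL2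
          linear_combination 2*hL2 + (k^2+2)*hu + (k^2+4)*k*hv - 8*ht
        linarith
      · obtain ⟨_, hF2⟩ := key2 k (2*n)
        have h2n : 2*(n+1) = 2*n + 2 := by omega
        rw [h2n]
        have hd : 2*(2 * genFib k 1 (2*n+2)) = 2*(2*y) := by
          rw [← hxu, ← hyv] at hF2
          linear_combination 2*hF2 + k*hu + (k^2+2)*hv
        linarith

theorem solutions_four_k_sq_add_four (k : ℤ) (hk : 1 < k) (x y : ℤ) (hx : 0 < x) (hy : 0 < y) :
    x ^ 2 - (k ^ 2 + 4) * y ^ 2 = 4 ↔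
      ∃ n : ℕ, 1 ≤ n ∧ x = genLucas k 1 (2 * n) ∧ y = genFib k 1 (2 * n) := by
  constructor
  · intro heq
    exact descent k hk y.toNat x y hx hy le_rfl heq
  · rintro ⟨n, hn, rfl, rfl⟩
    have h := pellVal k (2*n)
    rw [pow_mul] at h
    norm_num at h
    exact h
end

section
/- Let k > 1 be an integer. Then the positive integer solutions of the equation x² − (k² + 4)·y² = −4 are exactly the pairs (x, y) = (V_{2n−1}(k,1), U_{2n−1}(k,1)) for n ≥ 1. -/
lemma genFib_rec (k s : ℤ) (n : ℕ) :
    genFib k s (n + 2) = k * genFib k s (n + 1) + s * genFib k s n := rfl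

lemma genLucas_rec (k s : ℤ) (n : ℕ) :
    genLucas k s (n + 2) = k * genLucas k s (n + 1) + s * genLucas k s n := rfl

/-- Key norm identity with cross term, proved by simultaneous induction. -/
lemma key_id (k : ℤ) (n : ℕ) :
    genLucas k 1 n ^ 2 - (k ^ 2 + 4) * genFib k 1 n ^ 2 = 4 * (-1) ^ n ∧
    genLucas k 1 (n + 1) ^ 2 - (k ^ 2 + 4) * genFib k 1 (n + 1) ^ 2 = 4 * (-1) ^ (n + 1) ∧
    genLucas k 1 (n + 1) * genLucas k 1 n - (k ^ 2 + 4) * genFib k 1 (n + 1) * genFib k 1 n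
      = 2 * k * (-1) ^ n := by
  induction n with
  | zero =>
    refine ⟨?_, ?_, ?_⟩ <;> (simp [genFib, genLucas]; try ring)
  | succ n ih =>
    obtain ⟨i0, i1, j0⟩ := ih
    refine ⟨i1, ?_, ?_⟩
    · rw [genLucas_rec, genFib_rec]
      linear_combination (k ^ 2) * i1 + i0 + 2 * k * j0
    · rw [genLucas_rec, genFib_rec]
      linear_combination k * i1 + j0

/-- Two-step shift identities: `2 V_{n+2} = (k²+2) V_n + k(k²+4) U_n` and
`2 U_{n+2} = k V_n + (k²+2) U_n`. -/
lemma shift_id (k : ℤ) (n : ℕ) :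
    (2 * genLucas k 1 (n + 2) = (k ^ 2 + 2) * genLucas k 1 n + k * (k ^ 2 + 4) * genFib k 1 n ∧
     2 * genFib k 1 (n + 2) = k * genLucas k 1 n + (k ^ 2 + 2) * genFib k 1 n) ∧
    (2 * genLucas k 1 (n + 3) = (k ^ 2 + 2) * genLucas k 1 (n + 1)
        + k * (k ^ 2 + 4) * genFib k 1 (n + 1) ∧
     2 * genFib k 1 (n + 3) = k * genLucas k 1 (n + 1) + (k ^ 2 + 2) * genFib k 1 (n + 1)) := by
  induction n with
  | zero =>
    refine ⟨⟨?_, ?_⟩, ?_, ?_⟩ <;> (simp [genFib, genLucas]; try ring)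
  | succ n ih =>
    obtain ⟨⟨hV0, hU0⟩, hV1, hU1⟩ := ih
    have hV0' := hV0
    have hU0' := hU0
    rw [genLucas_rec] at hV0'
    rw [genFib_rec] at hU0'
    refine ⟨⟨hV1, hU1⟩, ?_, ?_⟩
    · show 2 * genLucas k 1 (n + 4) =
        (k ^ 2 + 2) * genLucas k 1 (n + 2) + k * (k ^ 2 + 4) * genFib k 1 (n + 2)
      have e4 : genLucas k 1 (n + 4) = k * genLucas k 1 (n + 3) + 1 * genLucas k 1 (n + 2) :=
        genLucas_rec k 1 (n + 2)
      linear_combination 2 * e4 + k * hV1 - k ^ 2 * (genLucas_rec k 1 n) -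
        k * (k ^ 2 + 4) * (genFib_rec k 1 n) + hV0'
    · show 2 * genFib k 1 (n + 4) =
        k * genLucas k 1 (n + 2) + (k ^ 2 + 2) * genFib k 1 (n + 2)
      have e4 : genFib k 1 (n + 4) = k * genFib k 1 (n + 3) + 1 * genFib k 1 (n + 2) :=
        genFib_rec k 1 (n + 2)
      linear_combination 2 * e4 + k * hU1 - k * (genLucas_rec k 1 n) -
        k ^ 2 * (genFib_rec k 1 n) + hU0'

lemma neg_dominates (a b : ℤ) (h2 : b ^ 2 < a ^ 2) (hb : 0 < b) (ha : a < 0) : b < -a := by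
  nlinarith

/-- Descent for the forward direction. -/
lemma forward_aux (k : ℤ) (hk : 1 < k) : ∀ N : ℕ, ∀ x y : ℤ, 0 < x → 0 < y → y ≤ (N : ℤ) →
    x ^ 2 - (k ^ 2 + 4) * y ^ 2 = -4 →
    ∃ n : ℕ, 1 ≤ n ∧ x = genLucas k 1 (2 * n - 1) ∧ y = genFib k 1 (2 * n - 1) := by
  intro N
  induction N with
  | zero => intro x y hx hy hN _; exfalso; omega
  | succ N ih =>
    intro x y hx hy hN heq
    by_cases hy1 : y = 1
    · subst hy1
      have hxk : x = k := by
        have h1 : (x - k) * (x + k) = 0 := by linear_combination heq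
        have h2 : x + k > 0 := by linarith
        rcases mul_eq_zero.mp h1 with h | h
        · linarith
        · exfalso; linarith
      exact ⟨1, le_refl 1, by simpa [genLucas] using hxk, by simp [genFib]⟩
    · have hy2 : 2 ≤ y := by omega
      -- parity: x ≡ k y (mod 2)
      have hprod : (x - k * y) * (x + k * y) = 4 * (y ^ 2 - 1) := by linear_combination heq
      have hpar : ∃ c : ℤ, x = k * y + 2 * c := by
        rcases Int.even_or_odd (x - k * y) with he | ho
        · obtain ⟨c, hcc⟩ := he
          exact ⟨c, by linarith⟩
        · exfalso
          have ho2 : Odd (x + k * y) := by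
            obtain ⟨c, hcc⟩ := ho
            exact ⟨c + k * y, by linarith⟩
          have hodd : Odd (4 * (y ^ 2 - 1)) := hprod ▸ ho.mul ho2
          have heven : Even (4 * (y ^ 2 - 1)) := ⟨2 * (y ^ 2 - 1), by ring⟩
          exact (Int.not_odd_iff_even.mpr heven) hodd
      obtain ⟨c, hc⟩ := hpar
      subst hc
      -- the descended solution
      obtain ⟨x', hx'⟩ : ∃ t : ℤ, t = (k ^ 2 + 2) * c - k * y := ⟨_, rfl⟩
      obtain ⟨y', hy'⟩ : ∃ t : ℤ, t = y - k * c := ⟨_, rfl⟩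
      have hsol' : x' ^ 2 - (k ^ 2 + 4) * y' ^ 2 = -4 := by
        rw [hx', hy']; linear_combination heq
      have h4 : k * y * c + c ^ 2 = y ^ 2 - 1 := by
        have h44 : 4 * (k * y * c + c ^ 2) = 4 * (y ^ 2 - 1) := by linear_combination heq
        linarith
      -- c ≥ 1
      have hcpos : 1 ≤ c := by
        rcases lt_or_ge c 1 with h | h
        · exfalso
          have hc0 : c ≤ 0 := by omega
          have h5 : 0 < k * y + c := by linarith
          have h6 : 0 ≤ (-c) * (k * y + c) := mul_nonneg (by linarith) (le_of_lt h5)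
          nlinarith [h4, h6, hy2]
        · exact h
      -- y' > 0
      have hy'pos : 0 < y' := by
        rcases lt_or_ge 0 y' with h | h
        · exact h
        · exfalso
          have h1 : y ≤ k * c := by rw [hy'] at h; linarith
          have h7 : y * y ≤ y * (k * c) := mul_le_mul_of_nonneg_left h1 (by linarith)
          have h8 : 1 ≤ c * c := by nlinarith [hcpos]
          nlinarith [h4, h7, h8, hy2]
      -- y' < y
      have hy'lt : y' < y := by
        have hkc : 0 < k * c := mul_pos (by linarith) (by linarith)
        rw [hy']; linarith
      -- x' > 0
      have hx'pos : 0 < x' := by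
        rcases lt_or_ge 0 x' with h | h
        · exact h
        · exfalso
          have hrecon : (k ^ 2 + 2) * y' + k * x' = 2 * y := by rw [hx', hy']; ring
          rcases eq_or_lt_of_le h with h0 | hneg
          · -- x' = 0 impossible
            rw [h0] at hsol'
            nlinarith [hsol', hy'pos, hk, sq_nonneg (y' - 1), sq_nonneg (k * y'), sq_nonneg k]
          · by_cases hy'1 : y' = 1
            · -- then x' = -k and y = 1, contradiction
              rw [hy'1] at hsol'
              have hz : (x' + k) * (x' - k) = 0 := by linear_combination hsol'
              rcases mul_eq_zero.mp hz with h' | h'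
              · have hx'k : x' = -k := by linarith
                rw [hy'1, hx'k] at hrecon
                have : y = 1 := by linarith
                omega
              · linarith
            · have hy'2 : 2 ≤ y' := by omega
              have hk0 : (0 : ℤ) < k := by linarith
              have h2 : (k * y') ^ 2 < x' ^ 2 := by
                nlinarith [hsol', hy'2, sq_nonneg (y' - 2)]
              have h1 : k * y' < -x' := neg_dominates x' (k * y') h2 (mul_pos hk0 hy'pos) hneg
              have h3 : k * (k * y') < k * (-x') := mul_lt_mul_of_pos_left h1 hk0
              linarith [hrecon, hy'lt, h3]
      -- apply induction hypothesis
      have hy'N : y' ≤ (N : ℤ) := by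
        have h : y' < (N : ℤ) + 1 := by push_cast at hN; linarith
        exact Int.lt_add_one_iff.mp h
      obtain ⟨m, hm1, hmx, hmy⟩ := ih x' y' hx'pos hy'pos hy'N hsol'
      refine ⟨m + 1, by omega, ?_, ?_⟩
      · have hidx : 2 * (m + 1) - 1 = (2 * m - 1) + 2 := by omega
        rw [hidx]
        have hs := ((shift_id k (2 * m - 1)).1).1
        have hrx : (k ^ 2 + 2) * x' + k * (k ^ 2 + 4) * y' = 2 * (k * y + 2 * c) := by
          rw [hx', hy']; ring
        rw [hmx, hmy] at hrx
        linarith [hs, hrx]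
      · have hidx : 2 * (m + 1) - 1 = (2 * m - 1) + 2 := by omega
        rw [hidx]
        have hs := ((shift_id k (2 * m - 1)).1).2
        have hry : k * x' + (k ^ 2 + 2) * y' = 2 * y := by rw [hx', hy']; ring
        rw [hmx, hmy] at hry
        linarith [hs, hry]

theorem solutions_neg_four_k_sq_add_four (k : ℤ) (hk : 1 < k) (x y : ℤ) (hx : 0 < x) (hy : 0 < y) :
    x ^ 2 - (k ^ 2 + 4) * y ^ 2 = -4 ↔
      ∃ n : ℕ, 1 ≤ n ∧ x = genLucas k 1 (2 * n - 1) ∧ y = genFib k 1 (2 * n - 1) := by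
  constructor
  · intro heq
    exact forward_aux k hk y.toNat x y hx hy (by exact_mod_cast Int.self_le_toNat y) heq
  · rintro ⟨n, hn, hxv, hyu⟩
    have hodd : Odd (2 * n - 1) := ⟨n - 1, by omega⟩
    have hkey := (key_id k (2 * n - 1)).1
    rw [hodd.neg_one_pow] at hkey
    rw [hxv, hyu]
    linarith [hkey]
end
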